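/- arXiv:2509.14517 — 4 statements merged into one kernel-verified Lean document; each statement's English description precedes it below -/
import Mathlib

section
/- Let r > 3 be a real number, let n* = ⌈r⌉, and let N, k be positive integers with r ≤ N/k < n*. Then the (N,k)-cycle graph G is cyclically n*-indecomposable: there is no partition of the vertices of G into n* sets G_0, ..., G_{n*-1}, with at least two of them nonempty, such that every edge of G either has both endpoints in some single G_i or goes from a vertex of G_i to a vertex of G_{(i+1) mod n*}. -/
/-- The edge relation of the `(N,k)`-cycle graph on vertices `ZMod N`:
`a R b` iff `b = a + j` for some `1 ≤ j ≤ k`. -/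
def NKEdge (N k : ℕ) (a b : ZMod N) : Prop :=
  ∃ j : ℕ, 1 ≤ j ∧ j ≤ k ∧ b = a + (j : ZMod N)

/-- Auxiliary combinatorial form: if `4 ≤ n`, `0 < N`, `0 < k` and `N < n * k`,
then the `(N,k)`-cycle graph admits no nonconstant cyclic `n`-part function. -/
theorem nk_aux (n N k : ℕ) (hn4 : 4 ≤ n) (hN : 0 < N) (hk : 0 < k)
    (hNnk : N < n * k) :
    ¬ ∃ f : ZMod N → ZMod n,
        (∀ a b : ZMod N, NKEdge N k a b → f b = f a ∨ f b = f a + 1) ∧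
          ∃ a b : ZMod N, f a ≠ f b := by
  rintro ⟨f, hf, a₀, b₀, hab⟩
  haveI : NeZero n := ⟨by omega⟩
  haveI : Fact (1 < n) := ⟨by omega⟩
  haveI : NeZero N := ⟨by omega⟩
  classical
  -- the increment function along unit steps
  set c : ℕ → ℕ := fun i => if f ((i:ZMod N) + 1) = f (i : ZMod N) then 0 else 1 with hc
  have hc01 : ∀ i, c i = 0 ∨ c i = 1 := by
    intro i; by_cases h : f ((i:ZMod N) + 1) = f (i : ZMod N) <;> simp [hc, h]
  have hstep : ∀ i : ℕ, f ((i : ZMod N) + 1) = f (i : ZMod N) + (c i : ZMod n) := by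
    intro i
    by_cases h : f ((i:ZMod N) + 1) = f (i : ZMod N)
    · simp [hc, h]
    · have hedge : NKEdge N k (i : ZMod N) ((i:ZMod N) + 1) :=
        ⟨1, le_refl _, hk, by push_cast; ring⟩
      rcases hf _ _ hedge with h' | h'
      · exact absurd h' h
      · simp [hc, h, h', one_ne_zero]
  have hsum : ∀ a m : ℕ, f ((a + m : ℕ) : ZMod N)
      = f (a : ZMod N) + ((∑ i ∈ Finset.range m, c (a+i) : ℕ) : ZMod n) := by
    intro a m
    induction m with
    | zero => simp
    | succ m ih =>
      have hcast : ((a + (m+1) : ℕ) : ZMod N) = ((a + m : ℕ) : ZMod N) + 1 := by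
        push_cast; ring
      rw [hcast, hstep (a+m), ih, Finset.sum_range_succ]
      push_cast; ring
  -- window sums are 0 or 1 mod n
  have hwin : ∀ a j : ℕ, 1 ≤ j → j ≤ k →
      ((∑ i ∈ Finset.range j, c (a+i) : ℕ) : ZMod n) = 0 ∨
      ((∑ i ∈ Finset.range j, c (a+i) : ℕ) : ZMod n) = 1 := by
    intro a j hj1 hjk
    have hedge : NKEdge N k (a : ZMod N) ((a + j : ℕ) : ZMod N) :=
      ⟨j, hj1, hjk, by push_cast; ring⟩
    rcases hf _ _ hedge with h' | h' <;> rw [hsum a j] at h'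
    · left; exact add_eq_left.mp h'
    · right; exact add_left_cancel h'
  have h20 : ((2:ℕ) : ZMod n) ≠ 0 := by
    intro h
    have hv := ZMod.val_cast_of_lt (show 2 < n by omega)
    rw [h] at hv
    simp at hv
  have h21 : ((2:ℕ) : ZMod n) ≠ 1 := by
    intro h
    have hv := ZMod.val_cast_of_lt (show 2 < n by omega)
    have hv1 := ZMod.val_cast_of_lt (show 1 < n by omega)
    rw [show ((1:ℕ) : ZMod n) = 1 by push_cast; ring] at hv1
    rw [h, hv1] at hv
    omega
  -- after an increment, the next k-1 steps are flat
  have L : ∀ e : ℕ, ∀ a : ℕ, c a = 1 → e + 2 ≤ k → c (a + 1 + e) = 0 := by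
    intro e
    induction e using Nat.strong_induction_on with
    | _ e ih =>
      intro a ha hek
      rcases hc01 (a+1+e) with h0 | h1
      · exact h0
      exfalso
      have hsum2 : ∑ i ∈ Finset.range (e+2), c (a+i) = 2 := by
        rw [Finset.sum_range_succ, Finset.sum_range_succ']
        have hmid : ∑ i ∈ Finset.range e, c (a+(i+1)) = 0 := by
          apply Finset.sum_eq_zero
          intro i hi
          have hi' := Finset.mem_range.mp hi
          have hI := ih i hi' a ha (by omega)
          have harg : a + (i+1) = a + 1 + i := by omega
          rw [harg]; exact hI
        have hlast : c (a + (e+1)) = 1 := by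
          have harg : a + (e+1) = a + 1 + e := by omega
          rw [harg]; exact h1
        rw [hmid, hlast]
        simpa using ha
      have hw := hwin a (e+2) (by omega) hek
      rw [hsum2] at hw
      rcases hw with h' | h'
      · exact h20 h'
      · exact h21 h'
  -- every window of length k has at most one increment
  have hwle : ∀ a : ℕ, ∑ i ∈ Finset.range k, c (a+i) ≤ 1 := by
    intro a
    by_cases hz : ∀ i ∈ Finset.range k, c (a+i) = 0
    · rw [Finset.sum_eq_zero hz]; exact Nat.zero_le 1
    · push_neg at hz
      obtain ⟨i₀, hi₀, hne⟩ := hz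
      have hex : ∃ p, p < k ∧ c (a+p) = 1 :=
        ⟨i₀, Finset.mem_range.mp hi₀, (hc01 _).resolve_left hne⟩
      obtain ⟨hpk, hpc⟩ := Nat.find_spec hex
      have hone : ∑ i ∈ Finset.range k, c (a+i) = c (a + Nat.find hex) := by
        apply Finset.sum_eq_single_of_mem _ (Finset.mem_range.mpr hpk)
        intro i hi hip
        have hik := Finset.mem_range.mp hi
        rcases lt_or_gt_of_ne hip with h | h
        · have hm := Nat.find_min hex h
          push_neg at hm
          rcases hc01 (a+i) with h0 | h1
          · exact h0
          · exact absurd h1 (hm hik)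
        · have hL := L (i - Nat.find hex - 1) (a + Nat.find hex) hpc (by omega)
          have harg : a + Nat.find hex + 1 + (i - Nat.find hex - 1) = a + i := by omega
          rw [harg] at hL
          exact hL
      rw [hone, hpc]
  -- periodicity of c
  have hcastN : ∀ i : ℕ, ((i + N : ℕ) : ZMod N) = (i : ZMod N) := by
    intro i; push_cast; simp
  have cper : ∀ i, c (i + N) = c i := by
    intro i
    simp only [hc]
    rw [hcastN]
  set S := ∑ i ∈ Finset.range N, c i with hS
  -- shift invariance of the full-period sum
  have hshift : ∀ a : ℕ, ∑ i ∈ Finset.range N, c (a+i) = S := by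
    intro a
    induction a with
    | zero => simp [hS]
    | succ a ih =>
      have h1' : ∑ i ∈ Finset.range (N+1), c (a+i)
          = (∑ i ∈ Finset.range N, c (a+(i+1))) + c (a+0) := Finset.sum_range_succ' _ _
      have h2' : ∑ i ∈ Finset.range (N+1), c (a+i)
          = (∑ i ∈ Finset.range N, c (a+i)) + c (a+N) := Finset.sum_range_succ _ _
      have h3' : c (a+N) = c a := cper a
      have h4' : ∑ i ∈ Finset.range N, c (a+1+i) = ∑ i ∈ Finset.range N, c (a+(i+1)) := by
        apply Finset.sum_congr rfl
        intro i _
        congr 1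
        omega
      rw [h4']
      have h5' : a + 0 = a := rfl
      rw [h5'] at h1'
      rw [h3', ih] at h2'
      omega
  -- double counting
  have hdouble : ∑ a ∈ Finset.range N, ∑ i ∈ Finset.range k, c (a+i) = k * S := by
    rw [Finset.sum_comm]
    have hin : ∀ i ∈ Finset.range k, ∑ a ∈ Finset.range N, c (a+i) = S := by
      intro i _
      rw [← hshift i]
      apply Finset.sum_congr rfl
      intro a _
      congr 1
      omega
    rw [Finset.sum_congr rfl hin, Finset.sum_const, Finset.card_range, smul_eq_mul]
  have hkS : k * S ≤ N := by
    calc k * S = ∑ a ∈ Finset.range N, ∑ i ∈ Finset.range k, c (a+i) := hdouble.symm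
    _ ≤ ∑ _a ∈ Finset.range N, 1 := Finset.sum_le_sum (fun a _ => hwle a)
    _ = N := by simp
  -- n divides S
  have hdvd : n ∣ S := by
    have h := hsum 0 N
    have hz : ((0 + N : ℕ) : ZMod N) = 0 := by push_cast; simp
    have hz0 : ((0:ℕ) : ZMod N) = 0 := by push_cast; ring
    rw [hz, hz0] at h
    have hsum0 : ∑ i ∈ Finset.range N, c (0+i) = S := by
      rw [hS]
      apply Finset.sum_congr rfl
      intro i _
      congr 1
      omega
    rw [hsum0] at h
    have h0 : ((S:ℕ) : ZMod n) = 0 := (left_eq_add.mp h)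
    exact (ZMod.natCast_eq_zero_iff S n).mp h0
  -- S is nonzero since f is nonconstant
  have hSne : S ≠ 0 := by
    intro h0
    apply hab
    have hzero : ∀ i ∈ Finset.range N, c i = 0 :=
      Finset.sum_eq_zero_iff.mp (by rw [← hS]; exact h0)
    have hconst : ∀ x : ZMod N, f x = f 0 := by
      intro x
      have hx : ((x.val : ℕ) : ZMod N) = x := ZMod.natCast_rightInverse x
      have h := hsum 0 x.val
      have hz0 : ((0:ℕ) : ZMod N) = 0 := by push_cast; ring
      have hsx : ∑ i ∈ Finset.range x.val, c (0+i) = 0 := by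
        apply Finset.sum_eq_zero
        intro i hi
        have hi' := Finset.mem_range.mp hi
        have hiN : 0 + i < N := by
          have := ZMod.val_lt x
          omega
        have := hzero (0+i) (Finset.mem_range.mpr hiN)
        simpa using this
      rw [hsx, hz0] at h
      have hze : ((0 + x.val : ℕ) : ZMod N) = x := by rw [Nat.zero_add]; exact hx
      rw [hze] at h
      simpa using h
    rw [hconst a₀, hconst b₀]
  have hSn : n ≤ S := Nat.le_of_dvd (Nat.pos_of_ne_zero hSne) hdvd
  have hfin : n * k ≤ k * S := by
    calc n * k = k * n := Nat.mul_comm _ _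
    _ ≤ k * S := Nat.mul_le_mul_left _ hSn
  exact absurd (lt_of_le_of_lt (le_trans hfin hkS) hNnk) (lt_irrefl _)

/-- For a real `r > 3` with `n* = ⌈r⌉` and `r ≤ N/k < n*`, the `(N,k)`-cycle
graph is cyclically `n*`-indecomposable: there is no part-function
`f : ZMod N → ZMod n*` (encoding a partition into parts `G_0, ..., G_{n*-1}`)
that is nonconstant and such that every edge stays in its part or goes from
part `i` to part `i+1` (mod `n*`). -/
theorem nk_cycle_graph_cyclically_indecomposable (r : ℝ) (hr : 3 < r)
    (N k : ℕ) (hN : 0 < N) (hk : 0 < k)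
    (h1 : r ≤ (N : ℝ) / (k : ℝ)) (h2 : (N : ℝ) / (k : ℝ) < (⌈r⌉₊ : ℝ)) :
    ¬ ∃ f : ZMod N → ZMod ⌈r⌉₊,
        (∀ a b : ZMod N, NKEdge N k a b → f b = f a ∨ f b = f a + 1) ∧
          ∃ a b : ZMod N, f a ≠ f b := by
  have hn4 : 4 ≤ ⌈r⌉₊ := by
    have h3 : (3:ℕ) < ⌈r⌉₊ := by
      rw [Nat.lt_ceil]; exact_mod_cast hr
    omega
  have hNnk : N < ⌈r⌉₊ * k := by
    have hkpos : (0:ℝ) < (k:ℝ) := by exact_mod_cast hk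
    have := (div_lt_iff₀ hkpos).mp h2
    exact_mod_cast this
  exact nk_aux ⌈r⌉₊ N k hn4 hN hk hNnk
end

section
/- Let G be a finite directed graph with a cyclic n-decomposition G = G_0 ⊔ ... ⊔ G_{n-1} ⊔ D where the decomposition is directed (all edges between G_i and G_{(i+1) mod n} go from G_i to G_{(i+1) mod n}). Let h : H → G be the associated n-helix map, and write the vertices of H above G_i at level j as G_i^j for j < ω. Then H contains no directed n-cycle γ' such that h ∘ γ' traverses the parts G_0, G_1, ..., G_{n-1} in cyclic order (that is, with the i-th vertex of γ' lying above G_i). -/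
/-- A directed cycle of length `k` in a digraph `(V, R)`. -/
def IsDirCycle {V : Type*} (R : V → V → Prop) (k : ℕ) (c : ℕ → V) : Prop :=
  ∀ i < k, R (c i) (c ((i + 1) % k))

/-- Vertices of the `n`-helix cover of a directed graph with vertex set `V` and
cyclic `n`-decomposition encoded by `p : V → Option (ZMod n)`. -/
def HelixVtx {V : Type*} {n : ℕ} (p : V → Option (ZMod n)) : Type _ :=
  {x : V × ℕ // p x.1 = none → x.2 = 0}

/-- Edges of the `n`-helix cover. -/
def HelixEdge {V : Type*} {n : ℕ} (R : V → V → Prop) (p : V → Option (ZMod n))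
    (x y : HelixVtx p) : Prop :=
  R x.1.1 y.1.1 ∧
    match p x.1.1, p y.1.1 with
    | none, _ => True
    | _, none => True
    | some i, some i' =>
        (i' = i ∧ x.1.2 = y.1.2) ∨ (i' = i + 1 ∧ x.1.2 < y.1.2) ∨
          (i = i' + 1 ∧ y.1.2 < x.1.2)

/-- If the cyclic `n`-decomposition is directed, the helix cover contains no
directed `n`-cycle traversing the parts `G_0, G_1, ..., G_{n-1}` in cyclic
order (the `i`-th vertex of the cycle lying above `G_i`). -/
theorem directed_helix_no_ordered_cycle {V : Type*} [Fintype V]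
    (n : ℕ) (hn : 3 ≤ n) (R : V → V → Prop) (p : V → Option (ZMod n))
    (hdec : ∀ v w, R v w → ∃ i : ZMod n,
      (p v = some i ∨ p v = some (i + 1) ∨ p v = none) ∧
        (p w = some i ∨ p w = some (i + 1) ∨ p w = none))
    (hdir : ∀ v w (i : ZMod n), R v w → p v = some (i + 1) → p w = some i →
      False) :
    ¬ ∃ w : ℕ → HelixVtx p, IsDirCycle (HelixEdge R p) n w ∧
        ∀ i < n, p ((w i).1.1) = some (i : ZMod n) := by

  rintro ⟨w, hcyc, hp⟩
  haveI : NeZero n := ⟨by omega⟩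
  haveI : Fact (1 < n) := ⟨by omega⟩
  have key : ∀ i < n, (w i).1.2 < (w ((i + 1) % n)).1.2 := by
    intro i hi
    have hc := hcyc i hi
    have h1 : p ((w i).1.1) = some (i : ZMod n) := hp i hi
    have h2 : p ((w ((i + 1) % n)).1.1) = some ((i : ZMod n) + 1) := by
      have := hp ((i + 1) % n) (Nat.mod_lt _ (by omega))
      rwa [ZMod.natCast_mod, Nat.cast_add, Nat.cast_one] at this
    rw [HelixEdge, h1, h2] at hc
    obtain ⟨-, hm⟩ := hc
    rcases hm with ⟨he, -⟩ | ⟨-, hlt⟩ | ⟨he, -⟩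
    · exfalso
      have h0 : (i : ZMod n) + 1 = (i : ZMod n) + 0 := by rw [add_zero]; exact he
      exact one_ne_zero (add_left_cancel h0)
    · exact hlt
    · exfalso
      have h2' : ((2 : ℕ) : ZMod n) = 0 := by
        have : (i : ZMod n) + 2 = (i : ZMod n) + 0 := by
          rw [add_zero]; linear_combination -he
        have := add_left_cancel this
        push_cast
        exact this
      rw [ZMod.natCast_eq_zero_iff] at h2'
      have := Nat.le_of_dvd (by norm_num) h2'
      omega
  have chain : ∀ k, 0 < k → k ≤ n → (w 0).1.2 < (w (k % n)).1.2 := by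
    intro k
    induction k with
    | zero => intro h; omega
    | succ k ih =>
      intro _ hk
      rcases Nat.eq_zero_or_pos k with h0 | hpos
      · subst h0
        simpa using key 0 (by omega)
      · have h1 := ih hpos (by omega)
        have h2 := key (k % n) (Nat.mod_lt _ (by omega))
        have hmod : (k % n + 1) % n = (k + 1) % n := by
          conv_rhs => rw [Nat.add_mod]
          rw [Nat.mod_eq_of_lt (show 1 < n by omega)]
        rw [hmod] at h2
        exact lt_trans h1 h2
  have := chain n (by omega) le_rfl
  simp [Nat.mod_self] at this
end

section
/- Let R be a binary relation on a set X and let N, k, m be positive integers. Call b_0, ..., b_{N-1} in X an (N,k)-cycle for R if R(b_i, b_{(i+j) mod N}) holds for all 0 ≤ i < N and 1 ≤ j ≤ k. If b'_0, ..., b'_{mN-1} is an (mN,mk)-cycle for R, then b_i := b'_{m(i+1)-1} for 0 ≤ i < N is an (N,k)-cycle for R. -/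
/-- An `(N,k)`-cycle for a binary relation `R` on `X`: a tuple
`b_0, ..., b_{N-1}` with `R (b i) (b ((i+j) mod N))` for all `i < N` and
`1 ≤ j ≤ k`. -/
def IsNKCycle {X : Type*} (R : X → X → Prop) (N k : ℕ) (b : ℕ → X) : Prop :=
  ∀ i < N, ∀ j : ℕ, 1 ≤ j → j ≤ k → R (b i) (b ((i + j) % N))

/-- If `b'_0, ..., b'_{mN-1}` is an `(mN, mk)`-cycle for `R`, then
`b_i := b'_{m(i+1)-1}` for `0 ≤ i < N` is an `(N,k)`-cycle for `R`. -/
theorem nk_cycle_of_mul_cycle {X : Type*} (R : X → X → Prop) (m N k : ℕ)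
    (hm : 0 < m) (hN : 0 < N) (hk : 0 < k) (b' : ℕ → X)
    (h : IsNKCycle R (m * N) (m * k) b') :
    IsNKCycle R N k (fun i => b' (m * (i + 1) - 1)) := by
  intro i hi j hj1 hjk
  set q := (i + j) / N with hq
  set r := (i + j) % N with hr
  have hrN : r < N := Nat.mod_lt _ hN
  have hdm : N * q + r = i + j := Nat.div_add_mod (i + j) N
  have h1 : 1 ≤ m * (i + 1) := Nat.one_le_iff_ne_zero.mpr (by positivity)
  have h3 : 1 ≤ m * (r + 1) := Nat.one_le_iff_ne_zero.mpr (by positivity)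
  have e : m * (i + 1) + m * j = q * (m * N) + m * (r + 1) := by
    have h2 : i + 1 + j = N * q + (r + 1) := by omega
    calc m * (i + 1) + m * j = m * (i + 1 + j) := by ring
      _ = m * (N * q + (r + 1)) := by rw [h2]
      _ = q * (m * N) + m * (r + 1) := by ring
  have e2 : m * (i + 1) - 1 + m * j = q * (m * N) + (m * (r + 1) - 1) := by
    rw [← Nat.sub_add_comm h1, e, Nat.add_sub_assoc h3]
  have lt1 : m * (i + 1) - 1 < m * N :=
    lt_of_lt_of_le (Nat.sub_lt (lt_of_lt_of_le h1 le_rfl) one_pos)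
      (Nat.mul_le_mul_left m (by omega))
  have ltr : m * (r + 1) - 1 < m * N :=
    lt_of_lt_of_le (Nat.sub_lt (lt_of_lt_of_le h3 le_rfl) one_pos)
      (Nat.mul_le_mul_left m (by omega))
  have hmod : (m * (i + 1) - 1 + m * j) % (m * N) = m * (r + 1) - 1 := by
    rw [e2, Nat.add_comm, Nat.add_mul_mod_self_right, Nat.mod_eq_of_lt ltr]
  have := h (m * (i + 1) - 1) lt1 (m * j)
    (le_trans hj1 (Nat.le_mul_of_pos_left j hm))
    (Nat.mul_le_mul_left m hjk)
  rw [hmod] at this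
  simpa using this
end

section
/- Let X be a set and R a binary relation on X. Suppose b'_0, ..., b'_{N'-1} is an (N', k)-cycle for R, and 0 ≤ î_1 < ... < î_l ≤ N'-1 are indices such that consecutive deleted indices (cyclically, including from î_l to î_1) differ mod N' by more than k-1 (i.e., the cyclic gaps between successive î_j's are all at least k). Let N = N' - l and let b_0, ..., b_{N-1} enumerate in order the elements b'_i with i ∉ {î_1, ..., î_l}. Then b_0, ..., b_{N-1} is an (N, k-1)-cycle for R. -/
private lemma gap_eq (n s g : ℕ) (hs : s < n) (hg : g < n) :
    ((s + g) % n + n - s) % n = g := by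
  rcases lt_or_ge (s + g) n with h | h
  · rw [Nat.mod_eq_of_lt h]
    have h1 : s + g + n - s = g + n := by omega
    rw [h1, Nat.add_mod_right, Nat.mod_eq_of_lt hg]
  · have h2 : (s + g) % n = s + g - n := by
      rw [Nat.mod_eq_sub_mod h, Nat.mod_eq_of_lt (by omega)]
    rw [h2]
    have h3 : s + g - n + n - s = g := by omega
    rw [h3, Nat.mod_eq_of_lt hg]

/-- Deleting from an `(N',k)`-cycle a set `S` of indices whose pairwise cyclic
gaps are all at least `k`, and enumerating the surviving indices in increasing
order by `e`, yields an `(N, k-1)`-cycle, where `N = N' - |S|`. -/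
theorem deletion_yields_smaller_cycle {X : Type*} (R : X → X → Prop)
    (N' k : ℕ) (hk : 0 < k) (b' : ℕ → X) (hb' : IsNKCycle R N' k b')
    (S : Finset ℕ) (hS : ∀ s ∈ S, s < N')
    (hgap : ∀ s ∈ S, ∀ s' ∈ S, s ≠ s' → k ≤ (s' + N' - s) % N')
    (N : ℕ) (hN : N = N' - S.card)
    (e : ℕ → ℕ) (he : StrictMonoOn e (Set.Iio N))
    (he2 : ∀ j < N, e j < N' ∧ e j ∉ S)
    (himg : ∀ i < N', i ∉ S → ∃ j < N, e j = i) :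
    IsNKCycle R N (k - 1) (fun j => b' (e j)) := by
  intro i hi j hj1 hjk
  show R (b' (e i)) (b' (e ((i + j) % N)))
  have hk2 : 2 ≤ k := by omega
  have hiN := he2 i hi
  have hN'pos : 0 < N' := lt_of_le_of_lt (Nat.zero_le _) hiN.1
  have hNpos : 0 < N := by omega
  have hij : (i + j) % N < N := Nat.mod_lt _ hNpos
  have hije := he2 _ hij
  rcases le_or_gt N' k with hsmall | hbig
  · -- easy case : N' ≤ k, every pair is related
    by_cases hac : e ((i + j) % N) = e i
    · have h2 : (e i + N') % N' = e ((i + j) % N) := by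
        rw [Nat.add_mod_right, Nat.mod_eq_of_lt hiN.1, hac]
      rw [← h2]
      exact hb' (e i) hiN.1 N' (by omega) hsmall
    · set a := e i with ha
      set c := e ((i + j) % N) with hc
      have hcN : c < N' := hije.1
      have haN : a < N' := hiN.1
      have hj'1 : 1 ≤ (c + N' - a) % N' := by
        rcases lt_or_ge (c + N' - a) N' with h | h
        · rw [Nat.mod_eq_of_lt h]; omega
        · have hh : (c + N' - a) % N' = c + N' - a - N' := by
            rw [Nat.mod_eq_sub_mod h, Nat.mod_eq_of_lt (by omega)]
          rw [hh]; omega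
      have hj'k : (c + N' - a) % N' ≤ k := le_trans (le_of_lt (Nat.mod_lt _ hN'pos)) hsmall
      have heq : (a + (c + N' - a) % N') % N' = c := by
        rw [Nat.add_mod_mod]
        have : a + (c + N' - a) = c + N' := by omega
        rw [this, Nat.add_mod_right, Nat.mod_eq_of_lt hcN]
      rw [← heq]
      exact hb' a haN _ hj'1 hj'k
  · -- main case : k < N'
    have adj : ∀ x ∈ S, (x + 1) % N' ∈ S → False := by
      intro x hx hx1
      have hxN := hS x hx
      have h1 := gap_eq N' x 1 hxN (by omega)
      have hne : x ≠ (x + 1) % N' := by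
        intro hEq
        rw [← hEq] at h1
        rw [show x + N' - x = N' by omega, Nat.mod_self] at h1
        omega
      have := hgap x hx ((x + 1) % N') hx1 hne
      rw [h1] at this
      omega
    have step : ∀ m, m < N → ∃ t, 1 ≤ t ∧ t ≤ 2 ∧
        e ((m + 1) % N) = (e m + t) % N' ∧ (t = 2 → (e m + 1) % N' ∈ S) := by
      intro m hm
      have hem := he2 m hm
      rcases lt_or_ge (m + 1) N with hm1 | hm1
      · -- non-wrap case
        have hem1 := he2 (m + 1) hm1
        have hmono : e m < e (m + 1) :=
          he (Set.mem_Iio.mpr hm) (Set.mem_Iio.mpr hm1) (by omega)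
        have hbetween : ∀ x, e m < x → x < e (m + 1) → x ∈ S := by
          intro x h1 h2
          by_contra hxS
          obtain ⟨jx, hjx, hejx⟩ := himg x (by omega) hxS
          have h3 : m < jx := by
            by_contra h
            push_neg at h
            rcases eq_or_lt_of_le h with h' | h'
            · rw [h'] at hejx; omega
            · have := he (Set.mem_Iio.mpr hjx) (Set.mem_Iio.mpr hm) h'
              omega
          have h4 : jx < m + 1 := by
            by_contra h
            push_neg at h
            rcases eq_or_lt_of_le h with h' | h'
            · rw [← h'] at hejx; omega
            · have := he (Set.mem_Iio.mpr hm1) (Set.mem_Iio.mpr hjx) h'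
              omega
          omega
        have hg : e (m + 1) - e m ≤ 2 := by
          by_contra hg
          push_neg at hg
          have h1 : e m + 1 ∈ S := hbetween _ (by omega) (by omega)
          have h2 : e m + 2 ∈ S := hbetween _ (by omega) (by omega)
          refine adj _ h1 ?_
          rw [show e m + 1 + 1 = e m + 2 by omega,
            Nat.mod_eq_of_lt (by omega : e m + 2 < N')]
          exact h2
        refine ⟨e (m + 1) - e m, by omega, hg, ?_, ?_⟩
        · rw [Nat.mod_eq_of_lt hm1,
            Nat.mod_eq_of_lt (show e m + (e (m + 1) - e m) < N' by omega)]
          omega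
        · intro ht
          have h1 : e m + 1 ∈ S := hbetween _ (by omega) (by omega)
          rw [Nat.mod_eq_of_lt (by omega)]
          exact h1
      · -- wrap case : m = N - 1
        have hmN : m + 1 = N := by omega
        have he0 := he2 0 hNpos
        have hle : e 0 ≤ e m := by
          rcases Nat.eq_zero_or_pos m with h | h
          · rw [h]
          · exact le_of_lt (he (Set.mem_Iio.mpr hNpos) (Set.mem_Iio.mpr hm) h)
        have hafter : ∀ x, e m < x → x < N' → x ∈ S := by
          intro x h1 h2
          by_contra hxS
          obtain ⟨jx, hjx, hejx⟩ := himg x h2 hxS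
          have h3 : jx ≤ m := by omega
          rcases eq_or_lt_of_le h3 with h' | h'
          · rw [h'] at hejx; omega
          · have := he (Set.mem_Iio.mpr hjx) (Set.mem_Iio.mpr hm) h'
            omega
        have hbefore : ∀ x, x < e 0 → x ∈ S := by
          intro x h1
          by_contra hxS
          obtain ⟨jx, hjx, hejx⟩ := himg x (by omega) hxS
          rcases Nat.eq_zero_or_pos jx with h' | h'
          · rw [h'] at hejx; omega
          · have := he (Set.mem_Iio.mpr hNpos) (Set.mem_Iio.mpr hjx) h'
            omega
        have hmid : ∀ i', 1 ≤ i' → i' < e 0 + N' - e m → (e m + i') % N' ∈ S := by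
          intro i' h1 h2
          rcases lt_or_ge (e m + i') N' with h | h
          · rw [Nat.mod_eq_of_lt h]; exact hafter _ (by omega) h
          · have hh : (e m + i') % N' = e m + i' - N' := by
              rw [Nat.mod_eq_sub_mod h, Nat.mod_eq_of_lt (by omega)]
            rw [hh]; exact hbefore _ (by omega)
        have ht2 : e 0 + N' - e m ≤ 2 := by
          by_contra h
          push_neg at h
          have h1 := hmid 1 (by omega) (by omega)
          have h2 := hmid 2 (by omega) (by omega)
          refine adj _ h1 ?_
          rw [Nat.mod_add_mod]
          exact h2
        refine ⟨e 0 + N' - e m, by omega, ht2, ?_, ?_⟩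
        · rw [hmN, Nat.mod_self,
            show e m + (e 0 + N' - e m) = e 0 + N' by omega,
            Nat.add_mod_right, Nat.mod_eq_of_lt he0.1]
        · intro ht
          exact hmid 1 (by omega) (by omega)
    -- main induction
    have main : ∀ jj, jj ≤ k - 1 → ∃ d, jj ≤ d ∧ d ≤ jj + 1 ∧
        e ((i + jj) % N) = (e i + d) % N' ∧
        (d = jj + 1 → ∃ m, 1 ≤ m ∧ m ≤ d ∧ (e i + m) % N' ∈ S) := by
      intro jj
      induction jj with
      | zero =>
        intro _
        refine ⟨0, le_refl _, by omega, ?_, by omega⟩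
        rw [Nat.add_zero, Nat.add_zero, Nat.mod_eq_of_lt hi, Nat.mod_eq_of_lt hiN.1]
      | succ n ih =>
        intro hn
        obtain ⟨d, hd1, hd2, hd3, hd4⟩ := ih (by omega)
        obtain ⟨t, ht1, ht2, ht3, ht4⟩ := step ((i + n) % N) (Nat.mod_lt _ hNpos)
        have hkey : e ((i + (n + 1)) % N) = (e i + (d + t)) % N' := by
          have h1 : (i + (n + 1)) % N = ((i + n) % N + 1) % N := by
            rw [Nat.mod_add_mod, ← Nat.add_assoc]
          rw [h1, ht3, hd3, Nat.mod_add_mod, Nat.add_assoc]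
        have hbound : d + t ≤ n + 2 := by
          by_contra hcon
          push_neg at hcon
          have hdeq : d = n + 1 := by omega
          have hteq : t = 2 := by omega
          obtain ⟨m, hm1, hm2, hm3⟩ := hd4 hdeq
          have hs' : (e i + d + 1) % N' ∈ S := by
            have := ht4 hteq
            rw [hd3, Nat.mod_add_mod] at this
            exact this
          have hg2 : d + 1 - m < N' := by omega
          have hsN : (e i + m) % N' < N' := Nat.mod_lt _ hN'pos
          have hseq : (e i + d + 1) % N' = ((e i + m) % N' + (d + 1 - m)) % N' := by
            rw [Nat.mod_add_mod]
            congr 1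
            omega
          have hgap2 := gap_eq N' ((e i + m) % N') (d + 1 - m) hsN hg2
          have hne : (e i + m) % N' ≠ ((e i + m) % N' + (d + 1 - m)) % N' := by
            intro hEq
            rw [← hEq] at hgap2
            rw [show (e i + m) % N' + N' - (e i + m) % N' = N' by omega,
              Nat.mod_self] at hgap2
            omega
          have hfin := hgap _ hm3 _ (by rw [← hseq]; exact hs') hne
          rw [hgap2] at hfin
          clear * - hfin hm1 hm2 hdeq hn hk2
          omega
        refine ⟨d + t, by omega, hbound, hkey, ?_⟩
        intro hdt
        rcases (by omega : t = 1 ∨ t = 2) with h | h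
        · obtain ⟨m, hm1, hm2, hm3⟩ := hd4 (by omega)
          exact ⟨m, hm1, by omega, hm3⟩
        · refine ⟨d + 1, by omega, by omega, ?_⟩
          have := ht4 h
          rw [hd3, Nat.mod_add_mod] at this
          rw [← Nat.add_assoc]
          exact this
    obtain ⟨d, hd1, hd2, hd3, _⟩ := main j hjk
    rw [hd3]
    exact hb' (e i) hiN.1 d (by omega) (by omega)
end
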